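/- Let ν ≠ κ be partitions of the same integer r, with β-number sequences β(ν) and β(κ) of length r. Then both ν/(ν∩κ) and κ/(ν∩κ) are ribbons if and only if |B(ν) ∩ B(κ)| = r - 2. -/

import Mathlib

/-- Two boxes share a common side. -/
def Adj (a b : ℕ × ℕ) : Prop :=
  (a.1 = b.1 ∧ (a.2 = b.2 + 1 ∨ b.2 = a.2 + 1)) ∨
  (a.2 = b.2 ∧ (a.1 = b.1 + 1 ∨ b.1 = a.1 + 1))

/-- A diagram is connected if any two of its boxes are joined by a path of
side-adjacent boxes lying inside the diagram. -/
def IsConnectedDiagram (θ : Set (ℕ × ℕ)) : Prop :=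
  ∀ a ∈ θ, ∀ b ∈ θ, Relation.ReflTransGen (fun x y => y ∈ θ ∧ Adj x y) a b

/-- The diagram contains no 2×2 block of boxes. -/
def NoSquare (θ : Set (ℕ × ℕ)) : Prop :=
  ¬ ∃ i j : ℕ, (i, j) ∈ θ ∧ (i + 1, j) ∈ θ ∧ (i, j + 1) ∈ θ ∧ (i + 1, j + 1) ∈ θ

/-- A ribbon: a nonempty connected diagram with no 2×2 block of boxes. -/
def IsRibbon (θ : Set (ℕ × ℕ)) : Prop :=
  θ.Nonempty ∧ IsConnectedDiagram θ ∧ NoSquare θ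

/-- Young diagram (rows and columns numbered from 1) of a partition with
at most `r` parts, given as `f : Fin r → ℕ`. -/
def cellsF {r : ℕ} (f : Fin r → ℕ) : Set (ℕ × ℕ) :=
  {p | ∃ i : Fin r, p.1 = (i : ℕ) + 1 ∧ 1 ≤ p.2 ∧ p.2 ≤ f i}

/-- The β-number `λ_i + s + 1 - i` (0-based index `i : Fin r`). -/
def betaNum {r : ℕ} (s : ℤ) (f : Fin r → ℕ) (i : Fin r) : ℤ :=
  (f i : ℤ) + s - (i : ℤ)

/-- The set of β-numbers. -/
def betaFinset {r : ℕ} (s : ℤ) (f : Fin r → ℕ) : Finset ℤ :=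
  Finset.image (betaNum s f) Finset.univ

/-- Dominance: all partial sums of `ν` are at most those of `κ`. -/
def Dominates {r : ℕ} (ν κ : Fin r → ℕ) : Prop :=
  ∀ k : Fin r, ∑ i ∈ Finset.univ.filter (· ≤ k), ν i ≤ ∑ i ∈ Finset.univ.filter (· ≤ k), κ i

/-- Strict dominance. -/
def StrictlyDominates {r : ℕ} (ν κ : Fin r → ℕ) : Prop :=
  Dominates ν κ ∧ ν ≠ κ

/-!
Read a skew shape along its diagonals. Row `i` of `f/m` occupies the contents
`(β_i(m), β_i(f)]`, and the shape is a ribbon iff each diagonal carries at most one cell and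
the occupied diagonals form a nonempty interval. For `μ = ν ∩ κ` the shapes `ν/μ` and `κ/μ`
never meet on a diagonal, so with `E = B(ν) \ B(κ)`, `F = B(κ) \ B(ν)` and
`g(t) = #{e ∈ E | t ≤ e} - #{e ∈ F | t ≤ e}`, the diagonal counts of `ν/μ` and `κ/μ` are the
positive and negative parts of `g`. Since `|E| = |F| = r - |B(ν) ∩ B(κ)|` and `g` takes both
signs, `|E| ≥ 2`. The points of `E` are exactly the unit descents of `g`; if both shapes are
ribbons, `g` is `1` on one interval and `-1` on another, and a descent must leave the first or
enter the second, so `|E| = 2`. Conversely, if `|E| = |F| = 2` both tail counts are at most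
`2`, and monotonicity alone forces `|g| ≤ 1` with order-connected sign sets.
-/

open Finset

section SkewShape

variable {r : ℕ} {s : ℤ} {m f : Fin r → ℕ} {p q : ℕ × ℕ} {t : ℤ}

def cellContent (s : ℤ) (p : ℕ × ℕ) : ℤ := p.2 + s - p.1 + 1

/-- Row `i` of `cellsF f \ cellsF m` consists of the cells whose content lies in
`(betaNum s m i, betaNum s f i]`, so this counts the cells of content `t`. -/
def diagCount (s : ℤ) (m f : Fin r → ℕ) (t : ℤ) : ℕ :=
  #{i | betaNum s m i < t ∧ t ≤ betaNum s f i}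

theorem mem_cellsF_sdiff :
    p ∈ cellsF f \ cellsF m ↔ ∃ i : Fin r, p.1 = i + 1 ∧ m i < p.2 ∧ p.2 ≤ f i := by
  simp only [cellsF, Set.mem_sdiff, Set.mem_ofPred_eq, not_exists, not_and]
  constructor
  · rintro ⟨⟨i, h1, h2, h3⟩, hm⟩
    exact ⟨i, h1, by_contra fun h => hm i h1 h2 (by omega), h3⟩
  · rintro ⟨i, h1, h2, h3⟩
    refine ⟨⟨i, h1, by omega, h3⟩, fun j hj _ => ?_⟩
    obtain rfl : j = i := Fin.ext (by omega)
    omega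

theorem diagCount_pos_iff :
    0 < diagCount s m f t ↔ ∃ i, betaNum s m i < t ∧ t ≤ betaNum s f i := by
  simp [diagCount, card_pos, filter_nonempty_iff]

theorem exists_mem_cellContent_eq (h : 0 < diagCount s m f t) :
    ∃ p ∈ cellsF f \ cellsF m, cellContent s p = t := by
  obtain ⟨i, h1, h2⟩ := diagCount_pos_iff.1 h
  simp only [betaNum] at h1 h2
  refine ⟨(i + 1, (t - s + i).toNat), mem_cellsF_sdiff.2 ⟨i, rfl, ?_, ?_⟩, ?_⟩ <;>
    simp only [cellContent] <;> omega

theorem diagCount_cellContent_pos (hp : p ∈ cellsF f \ cellsF m) :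
    0 < diagCount s m f (cellContent s p) := by
  obtain ⟨i, h1, h2, h3⟩ := mem_cellsF_sdiff.1 hp
  exact diagCount_pos_iff.2 ⟨i, by simp only [betaNum, cellContent]; omega,
    by simp only [betaNum, cellContent]; omega⟩

theorem eq_of_cellContent_eq (h1 : ∀ t, diagCount s m f t ≤ 1)
    (hp : p ∈ cellsF f \ cellsF m) (hq : q ∈ cellsF f \ cellsF m)
    (hpq : cellContent s p = cellContent s q) : p = q := by
  obtain ⟨i, hp1, hp2, hp3⟩ := mem_cellsF_sdiff.1 hp
  obtain ⟨j, hq1, hq2, hq3⟩ := mem_cellsF_sdiff.1 hq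
  simp only [cellContent] at hpq
  have hrow (k : Fin r) (hk : betaNum s m k < cellContent s p ∧ cellContent s p ≤ betaNum s f k) :
      k ∈ ({k | betaNum s m k < cellContent s p ∧ cellContent s p ≤ betaNum s f k} : Finset _) :=
    mem_filter.2 ⟨mem_univ k, hk⟩
  obtain rfl : i = j := card_le_one.1 (h1 (cellContent s p))
    i (hrow i (by simp only [betaNum, cellContent]; omega))
    j (hrow j (by simp only [betaNum, cellContent]; omega))
  exact Prod.ext (by omega) (by omega)

theorem cellContent_of_adj {a b : ℕ × ℕ} (h : Adj a b) :
    cellContent s b = cellContent s a + 1 ∨ cellContent s b = cellContent s a - 1 := by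
  unfold Adj at h
  unfold cellContent
  omega

theorem adj_of_cellContent_eq_add_one (hf : Antitone f) (hm : Antitone m)
    (h1 : ∀ t, diagCount s m f t ≤ 1) (hp : p ∈ cellsF f \ cellsF m)
    (hq : q ∈ cellsF f \ cellsF m) (hpq : cellContent s q = cellContent s p + 1) :
    Adj p q := by
  obtain ⟨i, hp1, hp2, hp3⟩ := mem_cellsF_sdiff.1 hp
  obtain ⟨j, hq1, hq2, hq3⟩ := mem_cellsF_sdiff.1 hq
  simp only [cellContent] at hpq
  rcases lt_or_ge j i with hji | hij
  · obtain ⟨k, hki⟩ : ∃ k : Fin r, (k : ℕ) + 1 = i := ⟨⟨i - 1, by omega⟩, by simp; omega⟩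
    rw [Fin.lt_def] at hji
    have hk : ((k : ℕ) + 1, p.2) ∈ cellsF f \ cellsF m := by
      refine mem_cellsF_sdiff.2 ⟨k, rfl, ?_, hp3.trans (hf (Fin.le_def.2 (by omega)))⟩
      have := hm (show j ≤ k from Fin.le_def.2 (by omega))
      omega
    obtain rfl := eq_of_cellContent_eq h1 hk hq (by simp only [cellContent]; omega)
    unfold Adj
    omega
  · have hk : (p.1, p.2 + 1) ∈ cellsF f \ cellsF m := by
      refine mem_cellsF_sdiff.2 ⟨i, hp1, by omega, ?_⟩
      have := hf hij
      rw [Fin.le_def] at hij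
      omega
    obtain rfl := eq_of_cellContent_eq h1 hk hq (by simp only [cellContent]; omega)
    unfold Adj
    omega

theorem noSquare_of_diagCount_le_one (h1 : ∀ t, diagCount s m f t ≤ 1) :
    NoSquare (cellsF f \ cellsF m) := by
  rintro ⟨i, j, hij, -, -, hij'⟩
  have := congrArg Prod.fst
    (eq_of_cellContent_eq h1 hij hij' (by simp only [cellContent]; push_cast; ring))
  omega

theorem diagCount_le_one_of_noSquare (hf : Antitone f) (hm : Antitone m)
    (hns : NoSquare (cellsF f \ cellsF m)) (t : ℤ) : diagCount s m f t ≤ 1 := by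
  unfold diagCount
  refine card_le_one.2 fun i hi j hj => ?_
  simp only [mem_filter, mem_univ, true_and] at hi hj
  simp only [betaNum] at hi hj
  by_contra hij
  wlog hlt : i < j generalizing i j
  · exact this j i hj hi (Ne.symm hij) (lt_of_le_of_ne (not_lt.1 hlt) (Ne.symm hij))
  rw [Fin.lt_def] at hlt
  obtain ⟨k, hik⟩ : ∃ k : Fin r, (k : ℕ) = i + 1 := ⟨⟨i + 1, by omega⟩, rfl⟩
  have hmk := hm (show i ≤ k from Fin.le_def.2 (by omega))
  have hfk := hf (show k ≤ j from Fin.le_def.2 (by omega))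
  have hfi := hf (show i ≤ j from Fin.le_def.2 (by omega))
  -- rows `i < j` both meet diagonal `t`, so the cell of row `i` on it is the corner of a 2×2 block
  refine hns ⟨i + 1, (t - s + i).toNat, ?_, ?_, ?_, ?_⟩
  · exact mem_cellsF_sdiff.2 ⟨i, rfl, by omega, by omega⟩
  · exact mem_cellsF_sdiff.2 ⟨k, by simp only; omega, by omega, by omega⟩
  · exact mem_cellsF_sdiff.2 ⟨i, rfl, by omega, by omega⟩
  · exact mem_cellsF_sdiff.2 ⟨k, by simp only; omega, by omega, by omega⟩

theorem exists_cellContent_eq_of_reflTransGen {θ : Set (ℕ × ℕ)} (hp : p ∈ θ)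
    (h : Relation.ReflTransGen (fun x y => y ∈ θ ∧ Adj x y) p q)
    (h₁ : cellContent s p ≤ t) (h₂ : t ≤ cellContent s q) : ∃ x ∈ θ, cellContent s x = t := by
  induction h with
  | refl => exact ⟨p, hp, by omega⟩
  | @tail b c _ hbc ih =>
    by_cases hb : t ≤ cellContent s b
    · exact ih hb
    · rcases cellContent_of_adj (s := s) hbc.2 with h | h
      · exact ⟨c, hbc.1, by omega⟩
      · omega

theorem ordConnected_of_isConnectedDiagram (hconn : IsConnectedDiagram (cellsF f \ cellsF m)) :
    Set.OrdConnected {t | 0 < diagCount s m f t} := by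
  refine ⟨fun t₁ h₁ t₃ h₃ t₂ ⟨h₁₂, h₂₃⟩ => ?_⟩
  obtain ⟨p, hp, rfl⟩ := exists_mem_cellContent_eq h₁
  obtain ⟨q, hq, rfl⟩ := exists_mem_cellContent_eq h₃
  obtain ⟨x, hx, rfl⟩ := exists_cellContent_eq_of_reflTransGen hp (hconn p hp q hq) h₁₂ h₂₃
  exact diagCount_cellContent_pos hx

theorem isConnectedDiagram_of_diagCount (hf : Antitone f) (hm : Antitone m)
    (h1 : ∀ t, diagCount s m f t ≤ 1) (hconn : Set.OrdConnected {t | 0 < diagCount s m f t}) :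
    IsConnectedDiagram (cellsF f \ cellsF m) := by
  suffices key : ∀ n : ℕ, ∀ p ∈ cellsF f \ cellsF m, ∀ q ∈ cellsF f \ cellsF m,
      (cellContent s q - cellContent s p).natAbs = n →
      Relation.ReflTransGen (fun x y => y ∈ cellsF f \ cellsF m ∧ Adj x y) p q from
    fun p hp q hq => key _ p hp q hq rfl
  intro n
  induction n with
  | zero =>
    intro p hp q hq h
    rw [eq_of_cellContent_eq h1 hp hq (by omega)]
  | succ n ih =>
    intro p hp q hq h
    have hp' := diagCount_cellContent_pos (s := s) hp
    have hq' := diagCount_cellContent_pos (s := s) hq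
    rcases lt_or_gt_of_ne (show cellContent s p ≠ cellContent s q by omega) with hlt | hlt
    · obtain ⟨x, hx, hpx⟩ := exists_mem_cellContent_eq
        (hconn.out hp' hq' ⟨by omega, by omega⟩ : 0 < diagCount s m f (cellContent s p + 1))
      exact .head ⟨hx, adj_of_cellContent_eq_add_one hf hm h1 hp hx hpx⟩
        (ih x hx q hq (by omega))
    · obtain ⟨x, hx, hpx⟩ := exists_mem_cellContent_eq
        (hconn.out hq' hp' ⟨by omega, by omega⟩ : 0 < diagCount s m f (cellContent s p - 1))
      have hxp := adj_of_cellContent_eq_add_one hf hm h1 hx hp (by omega)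
      exact .head ⟨hx, by unfold Adj at hxp ⊢; omega⟩ (ih x hx q hq (by omega))

theorem isRibbon_iff_diagCount (hf : Antitone f) (hm : Antitone m) :
    IsRibbon (cellsF f \ cellsF m) ↔ (∀ t, diagCount s m f t ≤ 1) ∧
      Set.OrdConnected {t | 0 < diagCount s m f t} ∧ ∃ t, 0 < diagCount s m f t := by
  constructor
  · rintro ⟨⟨p, hp⟩, hconn, hns⟩
    exact ⟨diagCount_le_one_of_noSquare hf hm hns, ordConnected_of_isConnectedDiagram hconn,
      _, diagCount_cellContent_pos hp⟩
  · rintro ⟨h1, hconn, t, ht⟩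
    obtain ⟨p, hp, -⟩ := exists_mem_cellContent_eq ht
    exact ⟨⟨p, hp⟩, isConnectedDiagram_of_diagCount hf hm h1 hconn,
      noSquare_of_diagCount_le_one h1⟩

end SkewShape

section TailCard

def tailCard (E : Finset ℤ) (t : ℤ) : ℕ := #{x ∈ E | t ≤ x}

variable {E F : Finset ℤ}

theorem tailCard_le_card (t : ℤ) : tailCard E t ≤ #E := card_filter_le _ _

theorem tailCard_antitone : Antitone (tailCard E) :=
  fun _ _ hab => card_le_card fun _ hx => by
    simp only [mem_filter] at hx ⊢
    exact ⟨hx.1, hab.trans hx.2⟩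

theorem tailCard_eq_tailCard_add_one_add (t : ℤ) :
    tailCard E t = tailCard E (t + 1) + if t ∈ E then 1 else 0 := by
  simp only [tailCard, card_filter]
  rw [← sum_ite_eq' E t fun _ => 1, ← sum_add_distrib]
  refine sum_congr rfl fun x _ => ?_
  split_ifs <;> omega

theorem tailCard_inter_add_tailCard_sdiff (t : ℤ) :
    tailCard (E ∩ F) t + tailCard (E \ F) t = tailCard E t := by
  have h := card_sdiff_add_card_inter {x ∈ E | t ≤ x} F
  have hsdiff : {x ∈ E | t ≤ x} \ F = {x ∈ E \ F | t ≤ x} := by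
    ext
    simp only [mem_filter, mem_sdiff]
    tauto
  rw [hsdiff, filter_inter] at h
  unfold tailCard
  omega

end TailCard

section AntitonePairs

variable {c₁ c₂ : ℤ → ℕ}

theorem two_le_of_tsub_pos {n : ℕ} (h₁ : Antitone c₁) (h₂ : Antitone c₂)
    (b₁ : ∀ t, c₁ t ≤ n) (b₂ : ∀ t, c₂ t ≤ n) {tp tn : ℤ}
    (hp : 0 < c₁ tp - c₂ tp) (hn : 0 < c₂ tn - c₁ tn) : 2 ≤ n := by
  rcases le_total tp tn with h | h
  · have := h₁ h; have := h₂ h; have := b₁ tp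
    omega
  · have := h₁ h; have := h₂ h; have := b₂ tn
    omega

theorem tsub_le_one_of_le_two (h₁ : Antitone c₁) (h₂ : Antitone c₂)
    (b₁ : ∀ t, c₁ t ≤ 2) (b₂ : ∀ t, c₂ t ≤ 2) {tn : ℤ} (hn : 0 < c₂ tn - c₁ tn) (t : ℤ) :
    c₁ t - c₂ t ≤ 1 := by
  have := b₁ t; have := b₂ tn
  rcases le_total t tn with h | h
  · have := h₂ h
    omega
  · have := h₁ h
    omega

theorem ordConnected_tsub_pos_of_le_two (h₁ : Antitone c₁) (h₂ : Antitone c₂)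
    (b₁ : ∀ t, c₁ t ≤ 2) (b₂ : ∀ t, c₂ t ≤ 2) {tn : ℤ} (hn : 0 < c₂ tn - c₁ tn) :
    Set.OrdConnected {t | 0 < c₁ t - c₂ t} := by
  refine ⟨fun t₁ ht₁ t₃ ht₃ t₂ ⟨h₁₂, h₂₃⟩ => ?_⟩
  simp only [Set.mem_ofPred_eq] at ht₁ ht₃ ⊢
  have := h₁ h₁₂; have := h₁ h₂₃; have := h₂ h₁₂; have := h₂ h₂₃
  have := b₁ t₁; have := b₂ t₁; have := b₂ tn
  rcases le_total tn t₁ with h | h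
  · have := h₁ h; have := h₂ h
    omega
  rcases le_total tn t₃ with h' | h'
  · have := h₁ h'; have := h₂ h
    omega
  · have := h₁ h'; have := h₂ h'
    omega

end AntitonePairs

theorem card_le_two_of_ordConnected {E F : Finset ℤ} (hEF : Disjoint E F)
    (hE₁ : ∀ t, tailCard E t - tailCard F t ≤ 1)
    (hE₂ : Set.OrdConnected {t | 0 < tailCard E t - tailCard F t})
    (hF₁ : ∀ t, tailCard F t - tailCard E t ≤ 1)
    (hF₂ : Set.OrdConnected {t | 0 < tailCard F t - tailCard E t}) : #E ≤ 2 := by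
  have hstep (t : ℤ) (ht : t ∈ E) :
      tailCard E t = tailCard E (t + 1) + 1 ∧ tailCard F t = tailCard F (t + 1) := by
    have hE := tailCard_eq_tailCard_add_one_add (E := E) t
    have hF := tailCard_eq_tailCard_add_one_add (E := F) t
    rw [if_pos ht] at hE
    rw [if_neg (disjoint_left.1 hEF ht)] at hF
    exact ⟨hE, hF⟩
  -- each `t ∈ E` is a unit descent of `tailCard E - tailCard F`: it either leaves
  -- `{E > F}` or enters `{F > E}`, and by order-connectedness each happens only once
  have hsep (t : ℤ) (ht : t ∈ E) (t' : ℤ) (ht' : t' ∈ E) (hlt : t < t')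
      (hiff : 0 < tailCard E t - tailCard F t ↔ 0 < tailCard E t' - tailCard F t') : False := by
    obtain ⟨a₁, a₂⟩ := hstep t ht
    obtain ⟨b₁, b₂⟩ := hstep t' ht'
    by_cases hpos : 0 < tailCard E t - tailCard F t
    · have : 0 < tailCard E (t + 1) - tailCard F (t + 1) :=
        hE₂.out hpos (hiff.1 hpos) ⟨by omega, by omega⟩
      have := hE₁ t
      omega
    · have hneg := hiff.not.1 hpos
      have : 0 < tailCard F t' - tailCard E t' :=
        hF₂.out (x := t + 1) (y := t' + 1)
          (show 0 < tailCard F (t + 1) - tailCard E (t + 1) by omega)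
          (show 0 < tailCard F (t' + 1) - tailCard E (t' + 1) by omega) ⟨by omega, by omega⟩
      have := hF₁ (t' + 1)
      omega
  calc #E ≤ #(univ : Finset Bool) :=
        card_le_card_of_injOn (fun t => decide (0 < tailCard E t - tailCard F t))
          (fun _ _ => mem_coe.2 (mem_univ _)) fun t ht t' ht' heq => by
            have hiff := decide_eq_decide.1 heq
            by_contra hne
            rcases lt_or_gt_of_ne hne with hlt | hlt
            · exact hsep t ht t' ht' hlt hiff
            · exact hsep t' ht' t ht hlt hiff.symm
    _ = 2 := rfl

theorem exists_lt_of_sum_eq {ι M : Type*} [Fintype ι] [AddCommMonoid M] [LinearOrder M]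
    [IsOrderedCancelAddMonoid M] {u v : ι → M} (hsum : ∑ i, u i = ∑ i, v i) (hne : u ≠ v) :
    ∃ i, v i < u i := by
  by_contra! h
  exact hne (funext fun i => (sum_eq_sum_iff_of_le fun i _ => h i).1 hsum i (mem_univ i))

section BetaNumbers

variable {r : ℕ} {s : ℤ} {m f ν κ : Fin r → ℕ}

theorem betaNum_strictAnti (hf : Antitone f) : StrictAnti (betaNum s f) := by
  intro i j hij
  have := hf hij.le
  rw [Fin.lt_def] at hij
  unfold betaNum
  omega

theorem card_betaFinset (hf : Antitone f) : #(betaFinset s f) = r := by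
  rw [betaFinset, card_image_of_injective _ (betaNum_strictAnti hf).injective, card_univ,
    Fintype.card_fin]

theorem tailCard_betaFinset (hf : Antitone f) (t : ℤ) :
    tailCard (betaFinset s f) t = #{i | t ≤ betaNum s f i} := by
  rw [tailCard, betaFinset, filter_image,
    card_image_of_injective _ (betaNum_strictAnti hf).injective]

theorem tailCard_betaFinset_add_diagCount (hm : Antitone m) (hf : Antitone f)
    (hmf : ∀ i, m i ≤ f i) (t : ℤ) :
    tailCard (betaFinset s m) t + diagCount s m f t = tailCard (betaFinset s f) t := by
  rw [tailCard_betaFinset hm, tailCard_betaFinset hf, diagCount, ← card_union_of_disjoint]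
  · congr 1
    ext i
    have := hmf i
    simp only [mem_union, mem_filter, mem_univ, true_and]
    simp only [betaNum]
    omega
  · exact disjoint_filter.2 fun i _ h₁ h₂ => by omega

theorem diagCount_inf_eq_zero (hν : Antitone ν) (hκ : Antitone κ) {t : ℤ}
    (h : 0 < diagCount s (fun i => min (ν i) (κ i)) ν t) :
    diagCount s (fun i => min (ν i) (κ i)) κ t = 0 := by
  by_contra h'
  obtain ⟨i, hi₁, hi₂⟩ := diagCount_pos_iff.1 h
  obtain ⟨j, hj₁, hj₂⟩ := diagCount_pos_iff.1 (Nat.pos_of_ne_zero h')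
  simp only [betaNum] at hi₁ hi₂ hj₁ hj₂
  rcases le_total i j with hij | hij
  · have := hκ hij
    rw [Fin.le_def] at hij
    omega
  · have := hν hij
    rw [Fin.le_def] at hij
    omega

theorem diagCount_inf_eq (hν : Antitone ν) (hκ : Antitone κ) (t : ℤ) :
    diagCount s (fun i => min (ν i) (κ i)) ν t =
      tailCard (betaFinset s ν \ betaFinset s κ) t -
        tailCard (betaFinset s κ \ betaFinset s ν) t := by
  have hμ : Antitone fun i => min (ν i) (κ i) := hν.min hκ
  have hνμ := tailCard_betaFinset_add_diagCount (s := s) hμ hν (fun i => min_le_left _ _) t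
  have hκμ := tailCard_betaFinset_add_diagCount (s := s) hμ hκ (fun i => min_le_right _ _) t
  have hνκ := tailCard_inter_add_tailCard_sdiff (E := betaFinset s ν) (F := betaFinset s κ) t
  have hκν := tailCard_inter_add_tailCard_sdiff (E := betaFinset s κ) (F := betaFinset s ν) t
  rw [inter_comm] at hκν
  have := diagCount_inf_eq_zero (s := s) (t := t) hν hκ
  omega

theorem isRibbon_sdiff_inf_iff (hν : Antitone ν) (hκ : Antitone κ) :
    IsRibbon (cellsF ν \ cellsF fun i => min (ν i) (κ i)) ↔
      (∀ t, tailCard (betaFinset s ν \ betaFinset s κ) t -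
          tailCard (betaFinset s κ \ betaFinset s ν) t ≤ 1) ∧
        Set.OrdConnected {t | 0 < tailCard (betaFinset s ν \ betaFinset s κ) t -
          tailCard (betaFinset s κ \ betaFinset s ν) t} ∧
        ∃ t, 0 < tailCard (betaFinset s ν \ betaFinset s κ) t -
          tailCard (betaFinset s κ \ betaFinset s ν) t := by
  rw [isRibbon_iff_diagCount (s := s) hν (hν.min hκ)]
  simp only [diagCount_inf_eq hν hκ]

theorem exists_tailCard_sdiff_pos (hν : Antitone ν) (hκ : Antitone κ)
    (hsum : ∑ i, ν i = ∑ i, κ i) (hne : ν ≠ κ) :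
    ∃ t, 0 < tailCard (betaFinset s ν \ betaFinset s κ) t -
      tailCard (betaFinset s κ \ betaFinset s ν) t := by
  obtain ⟨i, hi⟩ := exists_lt_of_sum_eq hsum hne
  refine ⟨betaNum s ν i, ?_⟩
  rw [← diagCount_inf_eq hν hκ]
  exact diagCount_pos_iff.2 ⟨i, by simp only [betaNum]; omega, le_rfl⟩

end BetaNumbers

/-- For distinct partitions ν, κ of r: both ν/(ν∩κ) and κ/(ν∩κ) are ribbons iff the
sets of β-numbers of ν and κ (each of size r) share exactly r - 2 elements. -/
theorem stmt9 (r : ℕ) (s : ℤ) (ν κ : Fin r → ℕ) (hν : Antitone ν) (hκ : Antitone κ)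
    (hνsum : ∑ i, ν i = r) (hκsum : ∑ i, κ i = r) (hne : ν ≠ κ) :
    (IsRibbon (cellsF ν \ cellsF (fun i => min (ν i) (κ i))) ∧
     IsRibbon (cellsF κ \ cellsF (fun i => min (ν i) (κ i)))) ↔
      (betaFinset s ν ∩ betaFinset s κ).card = r - 2 := by
  have hκν := isRibbon_sdiff_inf_iff (s := s) hκ hν
  simp only [min_comm (κ _)] at hκν
  rw [isRibbon_sdiff_inf_iff hν hκ, hκν]
  obtain ⟨tp, htp⟩ := exists_tailCard_sdiff_pos (s := s) hν hκ (hνsum.trans hκsum.symm) hne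
  obtain ⟨tn, htn⟩ := exists_tailCard_sdiff_pos (s := s) hκ hν (hκsum.trans hνsum.symm) hne.symm
  have hE := card_sdiff_add_card_inter (betaFinset s ν) (betaFinset s κ)
  have hF := card_sdiff_add_card_inter (betaFinset s κ) (betaFinset s ν)
  rw [card_betaFinset hν] at hE
  rw [card_betaFinset hκ, inter_comm] at hF
  set E := betaFinset s ν \ betaFinset s κ
  set F := betaFinset s κ \ betaFinset s ν
  have h2 : 2 ≤ #E := two_le_of_tsub_pos tailCard_antitone tailCard_antitone tailCard_le_card
    (fun t => (tailCard_le_card t).trans (by omega)) htp htn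
  constructor
  · rintro ⟨⟨hE₁, hE₂, -⟩, hF₁, hF₂, -⟩
    have : #E ≤ 2 := card_le_two_of_ordConnected disjoint_sdiff_sdiff hE₁ hE₂ hF₁ hF₂
    omega
  · intro h
    have hbE (t : ℤ) : tailCard E t ≤ 2 := (tailCard_le_card t).trans (by omega)
    have hbF (t : ℤ) : tailCard F t ≤ 2 := (tailCard_le_card t).trans (by omega)
    exact ⟨⟨tsub_le_one_of_le_two tailCard_antitone tailCard_antitone hbE hbF htn,
      ordConnected_tsub_pos_of_le_two tailCard_antitone tailCard_antitone hbE hbF htn, tp, htp⟩,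
      tsub_le_one_of_le_two tailCard_antitone tailCard_antitone hbF hbE htp,
      ordConnected_tsub_pos_of_le_two tailCard_antitone tailCard_antitone hbF hbE htp, tn, htn⟩
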